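/- The number E(n) of extended Cartesian trees on n nodes satisfies lg E(n) ≥ 2n − O(log n); consequently the effective entropy of range top-2 queries on arrays of length n is at least 2n − O(log n) bits. -/

import Mathlib

inductive BT where
  | leaf : BT
  | node : BT → BT → BT
deriving DecidableEq

namespace BT

/-- Number of nodes. -/
def size : BT → ℕ
  | leaf => 0
  | node l r => l.size + r.size + 1

/-- Inorder list of node positions (paths from the root; `false` = left step). -/
def inList : BT → List (List Bool)
  | leaf => []
  | node l r => (l.inList).map (List.cons false) ++ [] :: (r.inList).map (List.cons true)

/-- Preorder list of node positions. -/
def preList : BT → List (List Bool)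
  | leaf => []
  | node l r => [] :: ((l.preList).map (List.cons false) ++ (r.preList).map (List.cons true))

/-- Subtree rooted at a given position, if the position is valid. -/
def subtree? : BT → List Bool → Option BT
  | t, [] => some t
  | leaf, _ :: _ => none
  | node l r, b :: p => if b then r.subtree? p else l.subtree? p

/-- Size of the left spine (maximal path following left children, top node included). -/
def Lspine : BT → ℕ
  | leaf => 0
  | node l _ => l.Lspine + 1

/-- Size of the right spine. -/
def Rspine : BT → ℕ
  | leaf => 0
  | node _ r => r.Rspine + 1

/-- Size of the left inner spine of the root: right spine of the left child. -/
def lv : BT → ℕ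
  | leaf => 0
  | node l _ => l.Rspine

/-- Size of the right inner spine of the root: left spine of the right child. -/
def rv : BT → ℕ
  | leaf => 0
  | node _ r => r.Lspine

/-- Sum of `f` over all (sub)trees rooted at nodes of the tree. -/
def sumNodes (f : BT → ℕ) : BT → ℕ
  | leaf => 0
  | node l r => f (node l r) + sumNodes f l + sumNodes f r

/-- Number of leaf nodes (nodes with no children). -/
def leaves : BT → ℕ
  | leaf => 0
  | node leaf leaf => 1
  | node l r => leaves l + leaves r

end BT

/-- Longest common prefix of two paths: the LCA of two positions in a binary tree. -/
def lcp : List Bool → List Bool → List Bool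
  | a :: p, b :: q => if a = b then a :: lcp p q else []
  | _, _ => []

/-- Index of the minimum element of a list (0 if empty). -/
def minIdx {α : Type*} [LinearOrder α] (l : List α) : ℕ :=
  match l.argmin id with
  | none => 0
  | some a => l.idxOf a

/-- Cartesian tree construction with fuel. -/
def cartesianAux {α : Type*} [LinearOrder α] : ℕ → List α → BT
  | 0, _ => .leaf
  | _ + 1, [] => .leaf
  | n + 1, l@(_ :: _) =>
      .node (cartesianAux n (l.take (minIdx l))) (cartesianAux n (l.drop (minIdx l + 1)))

/-- The Cartesian tree of a list: root at the position of the minimum,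
recursively built on the prefix before and the suffix after the minimum. -/
def cartesian {α : Type*} [LinearOrder α] (l : List α) : BT :=
  cartesianAux l.length l

/-- `k` is the position of the minimum of `A` on the range `[i, j]`. -/
def isArgmin {α : Type*} [LinearOrder α] {n : ℕ} (A : Fin n → α) (i j k : Fin n) : Prop :=
  i ≤ k ∧ k ≤ j ∧ ∀ m, i ≤ m → m ≤ j → A k ≤ A m

/-- `k` is the position of the second smallest element of `A` on the range `[i, j]`. -/
def isSecondMin {α : Type*} [LinearOrder α] {n : ℕ} (A : Fin n → α) (i j k : Fin n) : Prop :=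
  i ≤ k ∧ k ≤ j ∧
    ∃ m, isArgmin A i j m ∧ k ≠ m ∧ ∀ l, i ≤ l → l ≤ j → l ≠ m → A k ≤ A l

/-- The node with inorder number `i` in `t` has a left child. -/
def hasLeftChildAt (t : BT) (i : ℕ) : Prop :=
  ∃ (p : List Bool) (ll lr r : BT),
    t.inList[i]? = some p ∧ t.subtree? p = some (.node (.node ll lr) r)

/-- Extended Cartesian trees: binary trees in which every two-child node carries a merge
word for its two inner spines. -/
inductive EBT where
  | leaf : EBT
  | node : EBT → EBT → List Bool → EBT
deriving DecidableEq

namespace EBT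

def size : EBT → ℕ
  | leaf => 0
  | node l r _ => l.size + r.size + 1

def Lspine : EBT → ℕ
  | leaf => 0
  | node l _ _ => l.Lspine + 1

def Rspine : EBT → ℕ
  | leaf => 0
  | node _ r _ => r.Rspine + 1

/-- Validity: at two-child nodes the merge word has length `l_v + r_v` with exactly
`r_v` occurrences of `true`; elsewhere it is empty. -/
def valid : EBT → Prop
  | leaf => True
  | node l r m =>
      l.valid ∧ r.valid ∧
        (if l ≠ leaf ∧ r ≠ leaf
          then m.length = l.Rspine + r.Lspine ∧ m.count true = r.Lspine
          else m = [])

end EBT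

/-! Both quantities are at least the Catalan number `C n`, the number of binary trees on `n`
nodes, and `4 ^ n ≤ 2n · centralBinom n = 2n(n+1) · C n ≤ n ^ 4 · C n` gives
`lg C n ≥ 2n - 4 lg n`.

Every binary tree becomes an extended Cartesian tree by giving each two-child node the merge
order that takes its whole right inner spine first.

For range top-2 queries, label the inorder positions of a binary tree `t` by preorder ranks. In
the resulting array the root of every subtree holds the minimum of the subtree's range, so the
argmin components of any top-2 answer table locate the root of `t`, then recursively the roots
of its subtrees: the tables of different trees differ. -/

open Function

lemma four_pow_le_pow_four_mul_catalan {n : ℕ} (hn : 2 ≤ n) : 4 ^ n ≤ n ^ 4 * catalan n := by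
  have hpoly : 2 * n * (n + 1) ≤ n ^ 4 := by
    obtain ⟨m, rfl⟩ := Nat.exists_eq_add_of_le hn
    ring_nf; nlinarith [Nat.zero_le m]
  calc 4 ^ n ≤ 2 * n * n.centralBinom :=
        Nat.four_pow_le_two_mul_self_mul_centralBinom n (by omega)
    _ = 2 * n * (n + 1) * catalan n := by rw [← succ_mul_catalan_eq_centralBinom]; ring
    _ ≤ n ^ 4 * catalan n := Nat.mul_le_mul_right _ hpoly

lemma two_mul_sub_four_mul_logb_le_logb_of_catalan_le {n m : ℕ} (hn : 2 ≤ n)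
    (hm : catalan n ≤ m) :
    2 * (n : ℝ) - 4 * Real.logb 2 n ≤ Real.logb 2 m := by
  have hcat : 0 < catalan n := Nat.pos_of_ne_zero fun h => by
    simpa [h] using four_pow_le_pow_four_mul_catalan hn
  have hbound : ((4 : ℝ) ^ n) ≤ n ^ 4 * m := by
    exact_mod_cast (four_pow_le_pow_four_mul_catalan hn).trans (Nat.mul_le_mul_left _ hm)
  have hlog := Real.logb_le_logb_of_le one_lt_two (by positivity) hbound
  rw [Real.logb_mul (by positivity) (by exact_mod_cast (hcat.trans_le hm).ne'), Real.logb_pow,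
    Real.logb_pow, show (4 : ℝ) = 2 ^ 2 by norm_num, Real.logb_pow,
    Real.logb_self_eq_one one_lt_two] at hlog
  push_cast at hlog
  linarith

lemma catalan_le_ncard {X : Type*} {S : Set X} (hS : S.Finite) (n : ℕ)
    (g : BinaryTree Unit → X)
    (hmaps : ∀ x : BinaryTree Unit, x.numNodes = n → g x ∈ S)
    (hinj : Set.InjOn g {x | x.numNodes = n}) : catalan n ≤ S.ncard := by
  rw [← BinaryTree.treesOfNumNodesEq_card_eq_catalan, ← Set.ncard_coe_finset,
    BinaryTree.coe_treesOfNumNodesEq]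
  exact Set.ncard_le_ncard_of_injOn g hmaps hinj hS

namespace EBT

lemma Lspine_le_size (e : EBT) : e.Lspine ≤ e.size := by
  induction e with
  | leaf => rfl
  | node l r m ihl ihr => simp only [Lspine, size]; omega

lemma Rspine_le_size (e : EBT) : e.Rspine ≤ e.size := by
  induction e with
  | leaf => rfl
  | node l r m ihl ihr => simp only [Rspine, size]; omega

lemma finite_setOf_valid_size_le (k : ℕ) : {e : EBT | e.valid ∧ e.size ≤ k}.Finite := by
  induction k with
  | zero =>
    refine (Set.finite_singleton leaf).subset fun e ⟨_, he⟩ => ?_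
    cases e with
    | leaf => rfl
    | node l r m => simp [size] at he
  | succ k ih =>
    refine (((ih.prod ih).prod (List.finite_length_le Bool (2 * k))).image
      fun p => node p.1.1 p.1.2 p.2).insert leaf |>.subset fun e ⟨hv, he⟩ => ?_
    cases e with
    | leaf => exact Set.mem_insert _ _
    | node l r m =>
      obtain ⟨hl, hr, hm⟩ := hv
      simp only [size] at he
      have hlen : m.length ≤ 2 * k := by
        split_ifs at hm
        · have := l.Rspine_le_size; have := r.Lspine_le_size; omega
        · simp [hm]
      have hl' : l.size ≤ k := by omega
      have hr' : r.size ≤ k := by omega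
      exact Set.mem_insert_of_mem _ ⟨((l, r), m), ⟨⟨⟨hl, hl'⟩, hr, hr'⟩, hlen⟩, rfl⟩

end EBT

namespace BinaryTree

def toEBT : BinaryTree Unit → EBT
  | nil => .leaf
  | node _ l r =>
      .node l.toEBT r.toEBT
        (if l.toEBT = .leaf ∨ r.toEBT = .leaf then []
          else List.replicate r.toEBT.Lspine true ++ List.replicate l.toEBT.Rspine false)

lemma size_toEBT (x : BinaryTree Unit) : x.toEBT.size = x.numNodes := by
  induction x with
  | nil => rfl
  | node _ l r ihl ihr => simp [toEBT, EBT.size, numNodes, ihl, ihr]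

lemma valid_toEBT (x : BinaryTree Unit) : x.toEBT.valid := by
  induction x with
  | nil => trivial
  | node _ l r ihl ihr =>
    refine ⟨ihl, ihr, ?_⟩
    by_cases h : l.toEBT = .leaf ∨ r.toEBT = .leaf
    · rw [if_pos h, if_neg (by tauto)]
    · rw [if_neg h, if_pos (by tauto)]
      simp [List.count_replicate, add_comm]

lemma toEBT_injective : Injective toEBT := by
  intro x y h
  induction x generalizing y with
  | nil => cases y <;> simp_all [toEBT]
  | node _ l r ihl ihr =>
    cases y with
    | nil => simp [toEBT] at h
    | node _ l' r' =>
      simp only [toEBT, EBT.node.injEq] at h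
      rw [ihl h.1, ihr h.2.1]

end BinaryTree

lemma catalan_le_card_valid_ebt (n : ℕ) :
    catalan n ≤ Nat.card {e : EBT // e.size = n ∧ e.valid} := by
  change catalan n ≤ Nat.card {e : EBT | e.size = n ∧ e.valid}
  rw [Nat.card_coe_set_eq]
  exact catalan_le_ncard ((EBT.finite_setOf_valid_size_le n).subset fun e he => ⟨he.2, he.1.le⟩)
    n BinaryTree.toEBT (fun x hx => ⟨(x.size_toEBT).trans hx, x.valid_toEBT⟩)
    BinaryTree.toEBT_injective.injOn

section RangeQueries

variable {α : Type*} [LinearOrder α] {n : ℕ}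

lemma exists_isArgmin (A : Fin n → α) {i j : Fin n} (hij : i ≤ j) :
    ∃ k, isArgmin A i j k := by
  obtain ⟨k, hk, hmin⟩ :=
    (Finset.Icc i j).exists_min_image A ⟨i, Finset.mem_Icc.2 ⟨le_rfl, hij⟩⟩
  rw [Finset.mem_Icc] at hk
  exact ⟨k, hk.1, hk.2, fun m h1 h2 => hmin m (Finset.mem_Icc.2 ⟨h1, h2⟩)⟩

lemma exists_isSecondMin (A : Fin n → α) {i j : Fin n} (hij : i < j) :
    ∃ k, isSecondMin A i j k := by
  obtain ⟨m, hm⟩ := exists_isArgmin A hij.le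
  have hne : ((Finset.Icc i j).erase m).Nonempty := by
    rcases eq_or_ne m i with rfl | h
    · exact ⟨j, Finset.mem_erase.2 ⟨hij.ne', Finset.mem_Icc.2 ⟨hij.le, le_rfl⟩⟩⟩
    · exact ⟨i, Finset.mem_erase.2 ⟨h.symm, Finset.mem_Icc.2 ⟨le_rfl, hij.le⟩⟩⟩
  obtain ⟨k, hk, hmin⟩ := Finset.exists_min_image _ A hne
  rw [Finset.mem_erase, Finset.mem_Icc] at hk
  exact ⟨k, hk.2.1, hk.2.2, m, hm, hk.1, fun p h1 h2 hpm =>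
    hmin p (Finset.mem_erase.2 ⟨hpm, Finset.mem_Icc.2 ⟨h1, h2⟩⟩)⟩

lemma exists_topTwo_answers (A : Fin n → α) :
    ∃ f : ∀ i j : Fin n, i < j → Fin n × Fin n,
      ∀ i j (h : i < j), isArgmin A i j (f i j h).1 ∧ isSecondMin A i j (f i j h).2 :=
  ⟨fun _ _ h => ((exists_isArgmin A h.le).choose, (exists_isSecondMin A h).choose),
    fun _ _ h => ⟨(exists_isArgmin A h.le).choose_spec, (exists_isSecondMin A h).choose_spec⟩⟩

lemma isArgmin.unique {A : Fin n → α} (hA : Injective A) {i j k k' : Fin n}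
    (h : isArgmin A i j k) (h' : isArgmin A i j k') : k = k' :=
  hA (le_antisymm (h.2.2 _ h'.1 h'.2.1) (h'.2.2 _ h.1 h.2.1))

/-- Singleton ranges, which an answer table does not cover, are answered by their only position. -/
def rangeMinOf (f : ∀ i j : Fin n, i < j → Fin n × Fin n) (i j k : ℕ) : Prop :=
  (i = j ∧ k = i) ∨
    ∃ (hi : i < n) (hj : j < n) (h : i < j),
      ((f ⟨i, hi⟩ ⟨j, hj⟩ (Fin.mk_lt_mk.2 h)).1 : ℕ) = k

lemma rangeMinOf.unique {f : ∀ i j : Fin n, i < j → Fin n × Fin n} {i j k k' : ℕ}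
    (h : rangeMinOf f i j k) (h' : rangeMinOf f i j k') : k = k' := by
  rcases h with ⟨rfl, rfl⟩ | ⟨_, _, hij, rfl⟩ <;>
    rcases h' with ⟨hij', rfl⟩ | ⟨_, _, hij', rfl⟩
  · rfl
  · omega
  · omega
  · rfl

lemma rangeMinOf_of_forall_le {A : Fin n → α} (hA : Injective A)
    {f : ∀ i j : Fin n, i < j → Fin n × Fin n}
    (hf : ∀ i j (h : i < j), isArgmin A i j (f i j h).1)
    {i j k : ℕ} (hik : i ≤ k) (hkj : k ≤ j) (hj : j < n)
    (hmin : ∀ m : Fin n, i ≤ m → (m : ℕ) ≤ j → A ⟨k, by omega⟩ ≤ A m) :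
    rangeMinOf f i j k := by
  rcases (hik.trans hkj).lt_or_eq with hij | rfl
  · refine Or.inr ⟨by omega, hj, hij, ?_⟩
    have hk : isArgmin A ⟨i, by omega⟩ ⟨j, hj⟩ ⟨k, by omega⟩ :=
      ⟨Fin.mk_le_mk.2 hik, Fin.mk_le_mk.2 hkj, hmin⟩
    rw [(hf _ _ _).unique hA hk]
  · exact Or.inl ⟨rfl, by omega⟩

end RangeQueries

namespace BinaryTree

variable {β : Type*}

/-- With the nodes of `t` laid out in inorder on the positions `a, a + 1, …`, the root of every
subtree sits at a position that `P` reports as a minimum of the subtree's range of positions. -/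
def IsCartesianFor (P : ℕ → ℕ → ℕ → Prop) : BinaryTree β → ℕ → Prop
  | nil, _ => True
  | node _ l r, a =>
      P a (a + l.numNodes + r.numNodes) (a + l.numNodes) ∧ l.IsCartesianFor P a ∧
        r.IsCartesianFor P (a + l.numNodes + 1)

theorem eq_of_isCartesianFor {P : ℕ → ℕ → ℕ → Prop}
    (hP : ∀ i j k k', P i j k → P i j k' → k = k')
    {x y : BinaryTree Unit} {a : ℕ} (hxy : x.numNodes = y.numNodes)
    (hx : x.IsCartesianFor P a) (hy : y.IsCartesianFor P a) : x = y := by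
  induction x generalizing y a with
  | nil => cases y <;> simp_all [numNodes]
  | node _ l r ihl ihr =>
    cases y with
    | nil => simp [numNodes] at hxy
    | node _ l' r' =>
      simp only [numNodes] at hxy
      obtain ⟨hroot, hl, hr⟩ := hx
      obtain ⟨hroot', hl', hr'⟩ := hy
      have hsize : l.numNodes = l'.numNodes := by
        have := hP _ _ _ _ hroot (by rwa [show a + l.numNodes + r.numNodes =
          a + l'.numNodes + r'.numNodes by omega])
        omega
      rw [ihl hsize hl hl', ihr (y := r') (by omega) hr (by rwa [hsize])]

/-- The preorder rank (counted from `c`) of the node at inorder position `i`: the root of every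
subtree carries the least label of the subtree's range. -/
def preorderLabel : BinaryTree β → ℕ → ℕ → ℕ
  | nil, _, _ => 0
  | node _ l r, c, i =>
      if i < l.numNodes then l.preorderLabel (c + 1) i
      else if i = l.numNodes then c
      else r.preorderLabel (c + 1 + l.numNodes) (i - l.numNodes - 1)

lemma preorderLabel_mem_Ico {t : BinaryTree β} {c i : ℕ} (hi : i < t.numNodes) :
    t.preorderLabel c i ∈ Set.Ico c (c + t.numNodes) := by
  induction t generalizing c i with
  | nil => simp [numNodes] at hi
  | node _ l r ihl ihr =>
    simp only [numNodes] at hi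
    simp only [preorderLabel, numNodes, Set.mem_Ico]
    split_ifs with h1 h2
    · have := ihl (c := c + 1) h1; simp only [Set.mem_Ico] at this; omega
    · omega
    · have := ihr (c := c + 1 + l.numNodes) (i := i - l.numNodes - 1) (by omega)
      simp only [Set.mem_Ico] at this; omega

lemma preorderLabel_injOn (t : BinaryTree β) (c : ℕ) :
    Set.InjOn (t.preorderLabel c) (Set.Iio t.numNodes) := by
  induction t generalizing c with
  | nil => simp [numNodes]
  | node _ l r ihl ihr =>
    intro i hi j hj hij
    simp only [Set.mem_Iio, numNodes] at hi hj
    have hl : ∀ {k}, k < l.numNodes → c + 1 ≤ l.preorderLabel (c + 1) k ∧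
        l.preorderLabel (c + 1) k < c + 1 + l.numNodes := preorderLabel_mem_Ico
    have hr : ∀ {k}, k < r.numNodes →
        c + 1 + l.numNodes ≤ r.preorderLabel (c + 1 + l.numNodes) k :=
      fun hk => (preorderLabel_mem_Ico hk).1
    simp only [preorderLabel] at hij
    split_ifs at hij with hi₁ hj₁ hj₂ hi₂ hj₁ hj₂ hj₁ hj₂
    · exact ihl (c + 1) hi₁ hj₁ hij
    · have := hl hi₁; omega
    · have := hl hi₁; have := hr (k := j - l.numNodes - 1) (by omega); omega
    · have := hl hj₁; omega
    · omega
    · have := hr (k := j - l.numNodes - 1) (by omega); omega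
    · have := hl hj₁; have := hr (k := i - l.numNodes - 1) (by omega); omega
    · have := hr (k := i - l.numNodes - 1) (by omega); omega
    · have := ihr (c + 1 + l.numNodes) (show i - l.numNodes - 1 < r.numNodes by omega)
        (show j - l.numNodes - 1 < r.numNodes by omega) hij
      omega

lemma isCartesianFor_rangeMinOf {n : ℕ} {L : ℕ → ℕ}
    (hA : Injective fun i : Fin n => (L i : ℝ))
    {f : ∀ i j : Fin n, i < j → Fin n × Fin n}
    (hf : ∀ i j (h : i < j), isArgmin (fun i : Fin n => (L i : ℝ)) i j (f i j h).1)
    (s : BinaryTree β) (a c : ℕ) (hs : a + s.numNodes ≤ n)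
    (hL : ∀ k < s.numNodes, L (a + k) = s.preorderLabel c k) :
    s.IsCartesianFor (rangeMinOf f) a := by
  induction s generalizing a c with
  | nil => trivial
  | node v l r ihl ihr =>
    simp only [numNodes] at hs
    have hroot : L (a + l.numNodes) = c := by
      rw [hL _ (by simp [numNodes])]
      simp [preorderLabel]
    refine ⟨rangeMinOf_of_forall_le hA hf (by omega) (by omega) (by omega) fun m h1 h2 => ?_,
      ihl a (c + 1) (by omega) fun k hk => ?_,
      ihr (a + l.numNodes + 1) (c + 1 + l.numNodes) (by omega) fun k hk => ?_⟩
    · have hm := hL (m - a) (by simp only [numNodes]; omega)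
      rw [Nat.add_sub_cancel' h1] at hm
      simp only [hroot, hm, Nat.cast_le]
      exact (preorderLabel_mem_Ico (t := node v l r) (by simp only [numNodes]; omega)).1
    · rw [hL k (by simp only [numNodes]; omega)]
      simp [preorderLabel, hk]
    · rw [show a + l.numNodes + 1 + k = a + (l.numNodes + 1 + k) by ring,
        hL _ (by simp only [numNodes]; omega), preorderLabel, if_neg (by omega), if_neg (by omega)]
      congr 1
      omega

end BinaryTree

lemma catalan_le_ncard_topTwo_answers (n : ℕ) :
    catalan n ≤ Set.ncard { f : ∀ i j : Fin n, i < j → Fin n × Fin n |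
      ∃ A : Fin n → ℝ, Injective A ∧
        ∀ i j (h : i < j), isArgmin A i j (f i j h).1 ∧ isSecondMin A i j (f i j h).2 } := by
  let A (x : BinaryTree Unit) : Fin n → ℝ := fun i => (x.preorderLabel 0 i : ℕ)
  have hA : ∀ x : BinaryTree Unit, x.numNodes = n → Injective (A x) := fun x hx i j hij =>
    Fin.ext <| x.preorderLabel_injOn 0 (by simp [hx]) (by simp [hx])
      (Nat.cast_injective (R := ℝ) hij)
  choose F hF using fun x => exists_topTwo_answers (A x)
  have hcart : ∀ x : BinaryTree Unit, x.numNodes = n → x.IsCartesianFor (rangeMinOf (F x)) 0 :=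
    fun x hx => x.isCartesianFor_rangeMinOf (hA x hx) (fun i j h => (hF x i j h).1) 0 0 (by omega)
      (fun k _ => by rw [zero_add])
  refine catalan_le_ncard (Set.toFinite _) n F (fun x hx => ⟨A x, hA x hx, hF x⟩) ?_
  intro x hx y hy hxy
  refine BinaryTree.eq_of_isCartesianFor (P := rangeMinOf (F x))
    (fun _ _ _ _ => rangeMinOf.unique) (hx.trans hy.symm) (hcart x hx) ?_
  rw [hxy]
  exact hcart y hy

/-- `lg E(n) ≥ 2n − O(log n)` for the number `E(n)` of extended Cartesian trees on `n`
nodes, and consequently the effective entropy of range top-2 queries on arrays of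
length `n` (the `lg` of the number of distinct answer functions) is also
`≥ 2n − O(log n)` bits. -/
theorem stmt17 :
    ∃ C : ℝ, 0 < C ∧ ∀ n : ℕ, 2 ≤ n →
      (2 * (n : ℝ) - C * Real.logb 2 n ≤
          Real.logb 2 (Nat.card {e : EBT // e.size = n ∧ e.valid})) ∧
      (2 * (n : ℝ) - C * Real.logb 2 n ≤
          Real.logb 2 (Set.ncard { f : ∀ i j : Fin n, i < j → Fin n × Fin n |
            ∃ A : Fin n → ℝ, Function.Injective A ∧
              ∀ i j (h : i < j),
                isArgmin A i j (f i j h).1 ∧ isSecondMin A i j (f i j h).2 })) :=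
  ⟨4, by norm_num, fun _ hn =>
    ⟨two_mul_sub_four_mul_logb_le_logb_of_catalan_le hn (catalan_le_card_valid_ebt _),
      two_mul_sub_four_mul_logb_le_logb_of_catalan_le hn (catalan_le_ncard_topTwo_answers _)⟩⟩
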